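/- arXiv:1711.09338 — 2 statements merged into one kernel-verified Lean document; each statement's English description precedes it below -/
import Mathlib

section
/- For T ~ IWL(φ,λ) with φ > 1, the mean is E[T] = λ(φ+λ−1) / ((λ+φ)(φ−1)). -/
/-!
Substituting `t = 1 / x` turns the IWL mean into a weighted Gamma integral:
`t * f(t) dt` becomes `C * x ^ (φ - 2) * (1 + x) * exp (-λ x) dx` with `C` the normalising constant,
and `∫ x ^ (a - 1) * (1 + x) * exp (-r x) dx = Γ(a) (r + a) / r ^ (a + 1)` for `a = φ - 1 > 0`.
-/

open MeasureTheory

/-- Density of the inverse weighted Lindley (IWL) distribution. -/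
noncomputable def iwl (φ lam t : ℝ) : ℝ :=
  lam ^ (φ + 1) / ((φ + lam) * Real.Gamma φ) * t ^ (-φ - 1) * (1 + 1 / t) *
    Real.exp (-lam / t)

open Real Set

theorem integral_Ioi_comp_inv {E : Type*} [NormedAddCommGroup E] [NormedSpace ℝ E] (g : ℝ → E) :
    ∫ x in Ioi 0, (x ^ 2)⁻¹ • g x⁻¹ = ∫ t in Ioi 0, g t := by
  rw [← integral_comp_rpow_Ioi g (p := -1) (by norm_num)]
  refine setIntegral_congr_fun measurableSet_Ioi fun x (hx : 0 < x) => ?_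
  rw [rpow_neg_one, show (-1 : ℝ) - 1 = -(2 : ℕ) by norm_num, rpow_neg hx.le, rpow_natCast]
  simp

theorem integral_rpow_mul_one_add_mul_exp_neg_mul_Ioi {a r : ℝ} (ha : 0 < a) (hr : 0 < r) :
    ∫ x in Ioi 0, x ^ (a - 1) * (1 + x) * exp (-(r * x)) = Gamma a * (r + a) / r ^ (a + 1) := by
  have integrable (s : ℝ) (hs : 0 < s) :
      IntegrableOn (fun x : ℝ => x ^ (s - 1) * exp (-(r * x))) (Ioi 0) := by
    simpa using integrableOn_rpow_mul_exp_neg_mul_rpow (p := 1) (by linarith) one_pos hr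
  have split : EqOn (fun x : ℝ => x ^ (a - 1) * (1 + x) * exp (-(r * x)))
      (fun x => x ^ (a - 1) * exp (-(r * x)) + x ^ (a + 1 - 1) * exp (-(r * x))) (Ioi 0) := by
    intro x (hx : 0 < x)
    simp only [add_sub_cancel_right, rpow_sub_one hx.ne']
    field_simp
  rw [setIntegral_congr_fun measurableSet_Ioi split,
    integral_add (integrable a ha) (integrable (a + 1) (by linarith)),
    integral_rpow_mul_exp_neg_mul_Ioi ha hr, integral_rpow_mul_exp_neg_mul_Ioi (by linarith) hr,
    Gamma_add_one ha.ne', div_rpow zero_le_one hr.le, div_rpow zero_le_one hr.le,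
    rpow_add_one hr.ne']
  simp only [one_rpow]
  field_simp

theorem iwl_inv {φ lam x : ℝ} (hx : 0 < x) :
    iwl φ lam x⁻¹ =
      lam ^ (φ + 1) / ((φ + lam) * Gamma φ) * (x ^ (φ + 1) * (1 + x) * exp (-(lam * x))) := by
  rw [iwl, inv_rpow hx.le, show -φ - 1 = -(φ + 1) by ring, rpow_neg hx.le, inv_inv, one_div,
    inv_inv, div_inv_eq_mul, neg_mul]
  ring

theorem integral_mul_iwl (φ lam : ℝ) :
    ∫ t in Ioi 0, t * iwl φ lam t =
      lam ^ (φ + 1) / ((φ + lam) * Gamma φ) *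
        ∫ x in Ioi 0, x ^ (φ - 2) * (1 + x) * exp (-(lam * x)) := by
  rw [← integral_Ioi_comp_inv, ← integral_const_mul]
  refine setIntegral_congr_fun measurableSet_Ioi fun x (hx : 0 < x) => ?_
  have hpow : (x ^ 2)⁻¹ * x⁻¹ * x ^ (φ + 1) = x ^ (φ - 2) := by
    rw [show φ - 2 = φ + 1 - 3 by ring, rpow_sub hx, rpow_ofNat]
    field_simp
  rw [smul_eq_mul, iwl_inv hx, ← hpow]
  ring

/-- The mean of the IWL distribution, for `φ > 1`. -/
theorem iwl_mean (φ lam : ℝ) (hφ : 1 < φ) (hlam : 0 < lam) :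
    ∫ t in Set.Ioi (0 : ℝ), t * iwl φ lam t =
      lam * (φ + lam - 1) / ((lam + φ) * (φ - 1)) := by
  have hφ₁ : 0 < φ - 1 := by linarith
  rw [integral_mul_iwl, show φ - 2 = φ - 1 - 1 by ring,
    integral_rpow_mul_one_add_mul_exp_neg_mul_Ioi hφ₁ hlam, sub_add_cancel]
  have hΓ : Gamma φ = (φ - 1) * Gamma (φ - 1) := by
    simpa using Gamma_add_one hφ₁.ne'
  have hΓ₁ : 0 < Gamma (φ - 1) := Gamma_pos_of_pos hφ₁
  have hlam_pow : lam ^ (φ + 1) = lam * lam ^ φ := by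
    rw [rpow_add_one hlam.ne', mul_comm]
  have hlam_pos : 0 < lam ^ φ := rpow_pos_of_pos hlam φ
  rw [hΓ, hlam_pow]
  field_simp
  ring
end

section
/- For T ~ IWL(φ,λ), E[log T] = log λ − 1/(λ+φ) − ψ(φ), where ψ is the digamma function. -/
open MeasureTheory

/-- The digamma function `ψ = (log Γ)'`. -/
noncomputable def digamma (x : ℝ) : ℝ :=
  deriv (fun y => Real.log (Real.Gamma y)) x

/-!
Substituting `t = λ / u` turns the IWL density into the mixture
`((λ + φ) Γ(φ))⁻¹ (λ + u) u ^ (φ - 1) e ^ (-u)` of the `Gamma(φ)` and `Gamma(φ + 1)` densities,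
and `log t` into `log λ - log u`. Differentiating Euler's integral under the integral sign gives
`∫ log u · u ^ (s - 1) e ^ (-u) du = Γ'(s)`, and `Γ'(φ + 1) = Γ(φ) + φ Γ'(φ)` reduces everything
to `Γ(φ)` and `Γ'(φ) = ψ(φ) Γ(φ)`.
-/

open Set Real

theorem integral_Ioi_comp_div {E : Type*} [NormedAddCommGroup E] [NormedSpace ℝ E]
    {c : ℝ} (hc : 0 < c) (f : ℝ → E) :
    ∫ t in Ioi 0, f t = ∫ u in Ioi 0, (c / u ^ 2) • f (c / u) := by
  have himage : (fun u => c / u) '' Ioi 0 = Ioi 0 := by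
    ext t
    refine ⟨fun ⟨u, hu, hut⟩ => hut ▸ div_pos hc hu, fun ht => ⟨c / t, div_pos hc ht, ?_⟩⟩
    field_simp [(mem_Ioi.mp ht).ne']
  have hderiv : ∀ u ∈ Ioi (0 : ℝ), HasDerivWithinAt (fun u => c / u) (-c / u ^ 2) (Ioi 0) u :=
    fun u hu => by
      simpa [div_eq_mul_inv, neg_div] using
        ((hasDerivAt_inv (mem_Ioi.mp hu).ne').const_mul c).hasDerivWithinAt
  have hinj : InjOn (fun u => c / u) (Ioi 0) := fun u _ v _ huv =>
    inv_injective ((mul_right_inj' hc.ne').mp huv)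
  have hsubst := integral_image_eq_integral_abs_deriv_smul measurableSet_Ioi hderiv hinj f
  rw [himage] at hsubst
  rw [hsubst]
  refine setIntegral_congr_fun measurableSet_Ioi fun u hu => ?_
  rw [abs_div, abs_neg, abs_of_pos hc, abs_of_pos (pow_pos hu 2)]

theorem abs_log_le_rpow_add_rpow_neg_div {x ε : ℝ} (hx : 0 < x) (hε : 0 < ε) :
    |log x| ≤ (x ^ ε + x ^ (-ε)) / ε := by
  have hpos : log x ≤ x ^ ε / ε := log_le_rpow_div hx.le hε
  have hneg : -log x ≤ x ^ (-ε) / ε := by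
    simpa [log_inv, rpow_neg hx.le, inv_rpow hx.le] using
      log_le_rpow_div (inv_nonneg.mpr hx.le) hε
  have : 0 ≤ x ^ ε / ε := by positivity
  have : 0 ≤ x ^ (-ε) / ε := by positivity
  rw [add_div, abs_le]
  constructor <;> linarith

section GammaIntegral

variable {s : ℝ}

theorem integrableOn_log_mul_GammaIntegrand (hs : 0 < s) :
    IntegrableOn (fun t => log t * (exp (-t) * t ^ (s - 1))) (Ioi 0) := by
  have hε : 0 < s / 2 := half_pos hs
  have hbound : IntegrableOn
      (fun t => (exp (-t) * t ^ (s + s / 2 - 1) + exp (-t) * t ^ (s / 2 - 1)) / (s / 2))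
      (Ioi 0) :=
    ((GammaIntegral_convergent (by linarith)).add (GammaIntegral_convergent hε)).div_const _
  refine hbound.mono' ?_ ?_
  · exact (continuousOn_log.mono fun t ht => (mem_Ioi.mp ht).ne').mul
      ((continuous_exp.comp continuous_neg).continuousOn.mul
        (continuousOn_id.rpow_const fun t ht => Or.inl (mem_Ioi.mp ht).ne'))
      |>.aestronglyMeasurable measurableSet_Ioi
  · filter_upwards [ae_restrict_mem measurableSet_Ioi] with t (ht : 0 < t)
    have h1 : t ^ (s + s / 2 - 1) = t ^ (s / 2) * t ^ (s - 1) := by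
      rw [← rpow_add ht]; ring_nf
    have h2 : t ^ (s / 2 - 1) = t ^ (-(s / 2)) * t ^ (s - 1) := by
      rw [← rpow_add ht]; ring_nf
    rw [norm_mul, norm_of_nonneg (by positivity : 0 ≤ exp (-t) * t ^ (s - 1)), h1, h2]
    calc |log t| * (exp (-t) * t ^ (s - 1))
        ≤ (t ^ (s / 2) + t ^ (-(s / 2))) / (s / 2) * (exp (-t) * t ^ (s - 1)) := by
          gcongr
          exact abs_log_le_rpow_add_rpow_neg_div ht hε
      _ = _ := by ring

theorem hasDerivAt_Gamma_eq_integral_log (hs : 0 < s) :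
    HasDerivAt Gamma (∫ t in Ioi 0, log t * (exp (-t) * t ^ (s - 1))) s := by
  have hC := (Complex.hasDerivAt_GammaIntegral (s := s) (by simpa using hs)).real_of_complex
  have hintegral : ∫ t in Ioi (0 : ℝ), (t : ℂ) ^ ((s : ℂ) - 1) * (log t * exp (-t)) =
      ((∫ t in Ioi 0, log t * (exp (-t) * t ^ (s - 1)) : ℝ) : ℂ) := by
    rw [← integral_complex_ofReal]
    refine setIntegral_congr_fun measurableSet_Ioi fun t ht => ?_
    rw [← Complex.ofReal_one, ← Complex.ofReal_sub, ← Complex.ofReal_cpow (le_of_lt ht)]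
    push_cast
    ring
  rw [hintegral, Complex.ofReal_re] at hC
  refine hC.congr_of_eventuallyEq ?_
  filter_upwards [isOpen_Ioi.mem_nhds hs] with x hx
  rw [Gamma, Complex.Gamma_eq_integral (by simpa using hx)]

theorem integrableOn_sub_log_mul_GammaIntegrand (hs : 0 < s) (a : ℝ) :
    IntegrableOn (fun t => (a - log t) * (exp (-t) * t ^ (s - 1))) (Ioi 0) := by
  simp_rw [sub_mul]
  exact ((GammaIntegral_convergent hs).const_mul a).sub (integrableOn_log_mul_GammaIntegrand hs)

theorem integral_sub_log_mul_GammaIntegrand (hs : 0 < s) (a : ℝ) :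
    ∫ t in Ioi 0, (a - log t) * (exp (-t) * t ^ (s - 1)) = a * Gamma s - deriv Gamma s := by
  simp_rw [sub_mul]
  rw [integral_sub ((GammaIntegral_convergent hs).const_mul a)
      (integrableOn_log_mul_GammaIntegrand hs), integral_const_mul, ← Gamma_eq_integral hs,
    (hasDerivAt_Gamma_eq_integral_log hs).deriv]

end GammaIntegral

theorem deriv_Gamma_add_one {s : ℝ} (hs : ∀ m : ℕ, s ≠ -m) :
    deriv Gamma (s + 1) = Gamma s + s * deriv Gamma s := by
  have hs0 : s ≠ 0 := by simpa using hs 0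
  have hs1 : ∀ m : ℕ, s + 1 ≠ -m := fun m h => hs (m + 1) (by push_cast; linarith)
  have hmul : HasDerivAt (fun x => x * Gamma x) (Gamma s + s * deriv Gamma s) s := by
    simpa using (hasDerivAt_id' s).fun_mul (differentiableAt_Gamma hs).hasDerivAt
  have hshift : HasDerivAt (fun x => Gamma (x + 1)) (deriv Gamma (s + 1)) s :=
    (differentiableAt_Gamma hs1).hasDerivAt.comp_add_const s 1
  refine hshift.unique (hmul.congr_of_eventuallyEq ?_)
  filter_upwards [isOpen_ne.mem_nhds hs0] with x hx
  exact Gamma_add_one hx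

theorem digamma_eq_deriv_Gamma_div_Gamma {s : ℝ} (hs : ∀ m : ℕ, s ≠ -m) :
    digamma s = deriv Gamma s / Gamma s :=
  deriv.log (differentiableAt_Gamma hs) (Gamma_ne_zero hs)

theorem div_sq_mul_iwl_div {φ lam u : ℝ} (hlam : 0 < lam) (hu : 0 < u) :
    lam / u ^ 2 * iwl φ lam (lam / u) =
      ((φ + lam) * Gamma φ)⁻¹ *
        (lam * (exp (-u) * u ^ (φ - 1)) + exp (-u) * u ^ (φ + 1 - 1)) := by
  have hpow : (lam / u) ^ (-φ - 1) = u ^ (φ - 1) * u ^ 2 / lam ^ (φ + 1) := by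
    rw [show -φ - 1 = -(φ + 1) by ring, rpow_neg (by positivity), div_rpow hlam.le hu.le,
      inv_div, show φ + 1 = φ - 1 + 2 by ring, rpow_add hu, rpow_two]
  have hpow' : u ^ (φ + 1 - 1) = u ^ (φ - 1) * u := by
    rw [← rpow_add_one hu.ne']; ring_nf
  have hexp : -lam / (lam / u) = -u := by field_simp
  rw [iwl, hpow, hexp, hpow']
  field_simp

/-- `E[log T] = log λ − 1/(λ+φ) − ψ(φ)` for `T ~ IWL(φ,λ)`. -/
theorem iwl_log_moment (φ lam : ℝ) (hφ : 0 < φ) (hlam : 0 < lam) :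
    ∫ t in Set.Ioi (0 : ℝ), Real.log t * iwl φ lam t =
      Real.log lam - 1 / (lam + φ) - digamma φ := by
  have hφ' : ∀ m : ℕ, φ ≠ -m := fun m => by linarith [(Nat.cast_nonneg m : (0 : ℝ) ≤ m)]
  have hmixture : EqOn (fun u => (lam / u ^ 2) • (log (lam / u) * iwl φ lam (lam / u)))
      (fun u => ((φ + lam) * Gamma φ)⁻¹ *
        (lam * ((log lam - log u) * (exp (-u) * u ^ (φ - 1))) +
          (log lam - log u) * (exp (-u) * u ^ (φ + 1 - 1)))) (Ioi 0) := fun u (hu : 0 < u) => by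
    simp only [smul_eq_mul]
    rw [log_div hlam.ne' hu.ne', mul_left_comm, div_sq_mul_iwl_div hlam hu]
    ring
  rw [integral_Ioi_comp_div hlam, setIntegral_congr_fun measurableSet_Ioi hmixture,
    integral_const_mul, integral_add ((integrableOn_sub_log_mul_GammaIntegrand hφ _).const_mul _)
      (integrableOn_sub_log_mul_GammaIntegrand (by linarith) _),
    integral_const_mul, integral_sub_log_mul_GammaIntegrand hφ,
    integral_sub_log_mul_GammaIntegrand (by linarith), Gamma_add_one hφ.ne',
    deriv_Gamma_add_one hφ', digamma_eq_deriv_Gamma_div_Gamma hφ']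
  have hΓ : Gamma φ ≠ 0 := (Gamma_pos_of_pos hφ).ne'
  field_simp
  ring
end
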